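/- Let N ≥ 3 be a prime and let M_k(N) be the N^k × N^k matrices over ZMod N defined recursively by: M_1(N) has entries m_{ij} = i + Σ_{l=1}^{j-i} (N − l + 1) (mod N) for i ≤ j and is symmetric; and the entry of M_{k+1}(N) at position (iN^k + p, jN^k + q) equals M_k(N)_{pq} + M_1(N)_{ij} (mod N) for 0 ≤ i, j ≤ N−1 and 0 ≤ p, q ≤ N^k − 1. Then for every k ≥ 1 and any two distinct rows r_i, r_j of M_k(N), the Hamming distance satisfies d_H(r_i, r_j) = (N − 1)N^{k−1}. -/

import Mathlib

/-- The `N × N` matrix `M_1(N)` over `ZMod N` with entries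
`m_{ij} = i + Σ_{l=1}^{j-i} (N - l + 1) (mod N)` for `i ≤ j`, and `m_{ij} = m_{ji}` for `i > j`. -/
def M1 (N : ℕ) (i j : ℕ) : ZMod N :=
  if i ≤ j then ((i + ∑ l ∈ Finset.Icc 1 (j - i), (N - l + 1) : ℕ) : ZMod N)
  else ((j + ∑ l ∈ Finset.Icc 1 (i - j), (N - l + 1) : ℕ) : ZMod N)

/-- The recursively defined `N^k × N^k` matrices `M_k(N)`: the entry of `M_{k+1}(N)` at
position `(i·N^k + p, j·N^k + q)` is `M_k(N)_{pq} + M_1(N)_{ij}`; the base case `k = 0` is the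
`1 × 1` zero matrix, so that `M_1(N)` is recovered at `k = 1`. -/
def Mk (N : ℕ) : ℕ → ℕ → ℕ → ZMod N
  | 0, _, _ => 0
  | k + 1, a, b => Mk N k (a % N ^ k) (b % N ^ k) + M1 N (a / N ^ k) (b / N ^ k)

/-!
For an odd prime `N`, summing the arithmetic progression gives `2 M₁(i, t) = i + t - (i - t)²` in
`ZMod N`, so for `i ≠ j` the row difference `t ↦ M₁(i, t) - M₁(j, t)` is affine in `t` with slope
`i - j ≠ 0`, hence a bijection of `ZMod N`.

Split row and column indices of `M_{k+1}` into a top digit and a remainder modulo `N^k`. Two rows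
with the same top digit differ, in each of the `N` column blocks, exactly where the corresponding
rows of `M_k` differ. Two rows with different top digits agree in exactly one column of each residue
class modulo `N^k`, by the bijectivity above. Induction on `k` gives `(N - 1) N^(k-1)` in both cases.
-/

open Finset

section hamming
variable {ι κ G : Type*} [Fintype ι] [Fintype κ]

theorem hammingDist_comp_equiv {β : Type*} [DecidableEq β] (e : ι ≃ κ) (x y : κ → β) :
    hammingDist (x ∘ e) (y ∘ e) = hammingDist x y := by
  simp only [hammingDist]
  rw [← card_map e.toEmbedding]
  congr 1
  ext k
  simp

variable [AddCommGroup G] [DecidableEq G]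

theorem hammingDist_prod_add_same (z : ι → G) (x y : κ → G) :
    hammingDist (fun p : ι × κ => x p.2 + z p.1) (fun p => y p.2 + z p.1)
      = Fintype.card ι * hammingDist x y := by
  simp only [hammingDist, ne_eq, add_left_inj]
  rw [← univ_product_univ, filter_product_right (fun k => ¬x k = y k), card_product, card_univ]

theorem hammingDist_prod_eq_sum {β : Type*} [DecidableEq β] (f g : ι × κ → β) :
    hammingDist f g = ∑ k, hammingDist (fun i => f (i, k)) (fun i => g (i, k)) := by
  simp only [hammingDist, card_filter, Fintype.sum_prod_type_right]

theorem hammingDist_add_of_bijective_sub {z z' : ι → G}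
    (h : Function.Bijective fun i => z i - z' i) (a b : G) :
    hammingDist (fun i => a + z i) (fun i => b + z' i) = Fintype.card ι - 1 := by
  classical
  obtain ⟨i₀, hi₀ : z i₀ - z' i₀ = b - a⟩ := h.2 (b - a)
  have hagree : ({i | a + z i = b + z' i} : Finset ι) = {i₀} := by
    ext i
    rw [mem_filter_univ, mem_singleton, ← h.1.eq_iff, hi₀, eq_sub_iff_add_eq, sub_add_eq_add_sub,
      sub_eq_iff_eq_add, add_comm a]
  rw [hammingDist, filter_not, ← compl_eq_univ_sdiff, card_compl, hagree, card_singleton]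

theorem hammingDist_prod_add_of_bijective_sub {z z' : ι → G}
    (h : Function.Bijective fun i => z i - z' i) (x y : κ → G) :
    hammingDist (fun p : ι × κ => x p.2 + z p.1) (fun p => y p.2 + z' p.1)
      = Fintype.card κ * (Fintype.card ι - 1) := by
  simp [hammingDist_prod_eq_sum, hammingDist_add_of_bijective_sub h]

end hamming

section M1
variable {N : ℕ}

theorem two_mul_cast_sum_Icc {d : ℕ} (hd : d ≤ N) :
    2 * ((∑ l ∈ Icc 1 d, (N - l + 1) : ℕ) : ZMod N) = d - d ^ 2 := by
  induction d with
  | zero => simp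
  | succ d ih =>
    rw [sum_Icc_succ_top (by omega), Nat.cast_add, mul_add, ih (by omega),
      show N - (d + 1) + 1 = N - d by omega, Nat.cast_sub (by omega), ZMod.natCast_self]
    push_cast
    ring

theorem two_mul_M1 {i j : ℕ} (hi : i ≤ N) (hj : j ≤ N) :
    2 * M1 N i j = i + j - ((i : ZMod N) - j) ^ 2 := by
  unfold M1
  split_ifs with h
  · rw [Nat.cast_add, mul_add, two_mul_cast_sum_Icc (by omega), Nat.cast_sub h]
    ring
  · rw [Nat.cast_add, mul_add, two_mul_cast_sum_Icc (by omega), Nat.cast_sub (by omega)]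
    ring

theorem eq_of_natCast_eq_of_lt {a b : ℕ} (ha : a < N) (hb : b < N) (h : (a : ZMod N) = b) :
    a = b := by
  rw [← ZMod.val_cast_of_lt ha, h, ZMod.val_cast_of_lt hb]

variable [Fact N.Prime]

theorem M1_sub_M1_bijective (hN : N ≠ 2) {a b : ℕ} (ha : a < N) (hb : b < N) (hab : a ≠ b) :
    Function.Bijective fun t : Fin N => M1 N a t - M1 N b t := by
  refine (Fintype.bijective_iff_injective_and_card _).2 ⟨fun t t' h => ?_, by simp⟩
  have hslope : 2 * ((a : ZMod N) - b) * ((t : ZMod N) - t') = 0 := by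
    have h2 := congrArg (2 * ·) h
    simp only [mul_sub, two_mul_M1 ha.le t.2.le, two_mul_M1 hb.le t.2.le, two_mul_M1 ha.le t'.2.le,
      two_mul_M1 hb.le t'.2.le] at h2
    linear_combination h2
  rcases mul_eq_zero.1 hslope with h | h
  · rcases mul_eq_zero.1 h with h | h
    · exact absurd h (Ring.two_ne_zero (by rwa [ZMod.ringChar_zmod_n]))
    · exact absurd (eq_of_natCast_eq_of_lt ha hb (sub_eq_zero.1 h)) hab
  · exact Fin.ext (eq_of_natCast_eq_of_lt t.2 t'.2 (sub_eq_zero.1 h))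

end M1

section Mk
variable {N : ℕ}

theorem Mk_succ_apply_add_mul {k r : ℕ} (a i : ℕ) (hr : r < N ^ k) :
    Mk N (k + 1) a (r + N ^ k * i) = Mk N k (a % N ^ k) r + M1 N (a / N ^ k) i := by
  rw [Mk, Nat.add_mul_mod_self_left, Nat.mod_eq_of_lt hr, Nat.add_mul_div_left _ _ (by omega),
    Nat.div_eq_of_lt hr, zero_add]

theorem hammingDist_Mk_succ_rows (k a b : ℕ) :
    hammingDist (fun t : Fin (N ^ (k + 1)) => Mk N (k + 1) a t)
        (fun t : Fin (N ^ (k + 1)) => Mk N (k + 1) b t)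
      = hammingDist (fun p : Fin N × Fin (N ^ k) => Mk N k (a % N ^ k) p.2 + M1 N (a / N ^ k) p.1)
          (fun p : Fin N × Fin (N ^ k) => Mk N k (b % N ^ k) p.2 + M1 N (b / N ^ k) p.1) := by
  rw [← hammingDist_comp_equiv (finProdFinEquiv.trans (finCongr (pow_succ' N k).symm))]
  congr 1 <;> funext p <;> exact Mk_succ_apply_add_mul _ _ p.2.2

theorem hammingDist_Mk_rows [Fact N.Prime] (hN : N ≠ 2) (k : ℕ) {a b : ℕ} (ha : a < N ^ k)
    (hb : b < N ^ k) (hab : a ≠ b) :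
    hammingDist (fun t : Fin (N ^ k) => Mk N k a t) (fun t : Fin (N ^ k) => Mk N k b t)
      = (N - 1) * N ^ (k - 1) := by
  induction k generalizing a b with
  | zero => simp only [pow_zero, Nat.lt_one_iff] at ha hb; exact absurd (ha.trans hb.symm) hab
  | succ k ih =>
    have hM : 0 < N ^ k := pow_pos (Nat.Prime.pos Fact.out) k
    have hdiv {c : ℕ} (hc : c < N ^ (k + 1)) : c / N ^ k < N := by
      rwa [Nat.div_lt_iff_lt_mul hM, ← pow_succ']
    rw [hammingDist_Mk_succ_rows]
    by_cases htop : a / N ^ k = b / N ^ k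
    · have hlow : a % N ^ k ≠ b % N ^ k := fun h =>
        hab (by rw [← Nat.div_add_mod a (N ^ k), htop, h, Nat.div_add_mod])
      have hk : k ≠ 0 := by rintro rfl; simp [Nat.mod_one] at hlow
      rw [htop, hammingDist_prod_add_same (fun i : Fin N => M1 N (b / N ^ k) i)
        (fun r : Fin (N ^ k) => Mk N k (a % N ^ k) r) (fun r => Mk N k (b % N ^ k) r),
        ih (Nat.mod_lt _ hM) (Nat.mod_lt _ hM) hlow, Fintype.card_fin]
      obtain ⟨k, rfl⟩ := Nat.exists_eq_add_one_of_ne_zero hk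
      simp only [Nat.add_sub_cancel]
      ring
    · rw [hammingDist_prod_add_of_bijective_sub (M1_sub_M1_bijective hN (hdiv ha) (hdiv hb) htop)
        (fun r : Fin (N ^ k) => Mk N k (a % N ^ k) r) (fun r => Mk N k (b % N ^ k) r)]
      simp only [Fintype.card_fin, Nat.add_sub_cancel]
      ring

end Mk

theorem Mk_distinct_rows_hammingDist_general (N : ℕ) (hN : 3 ≤ N) (hNp : N.Prime)
    (k : ℕ) (i j : Fin (N ^ k)) (hij : i ≠ j) :
    hammingDist (fun t : Fin (N ^ k) => Mk N k i t) (fun t : Fin (N ^ k) => Mk N k j t)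
      = (N - 1) * N ^ (k - 1) :=
  haveI := Fact.mk hNp
  hammingDist_Mk_rows (by omega) k i.isLt j.isLt (Fin.val_ne_of_ne hij)

theorem Mk_distinct_rows_hammingDist (N : ℕ) (hN : 3 ≤ N) (hNp : N.Prime)
    (k : ℕ) (hk : 1 ≤ k) (i j : Fin (N ^ k)) (hij : i ≠ j) :
    hammingDist (fun t : Fin (N ^ k) => Mk N k i t) (fun t : Fin (N ^ k) => Mk N k j t)
      = (N - 1) * N ^ (k - 1) :=
  Mk_distinct_rows_hammingDist_general N hN hNp k i j hij
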